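/- arXiv:1306.6145 — 2 statements merged into one kernel-verified Lean document; each statement's English description precedes it below -/
import Mathlib

section
/- Let 0 < ε and ω satisfy ε ≤ ω ≤ 2/ρ(A)² − ε, where ρ(A) is the spectral norm of A ∈ ℝ^{m×n}. Define T := I − ω AᵀA and R := ω Aᵀ. Then T + RA = I, range(R) ⊆ range(Aᵀ), and ‖T P_{range(Aᵀ)}‖ < 1. -/
open Matrix

/-- The continuous linear map on Euclidean spaces induced by a matrix. -/
noncomputable def mulE {m n : ℕ} (A : Matrix (Fin m) (Fin n) ℝ) :
    EuclideanSpace ℝ (Fin n) →L[ℝ] EuclideanSpace ℝ (Fin m) :=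
  LinearMap.toContinuousLinearMap (Matrix.toEuclideanLin A)

/-- The orthogonal projection of the ambient space onto a subspace, as a map of the
ambient space. -/
noncomputable def projCLM {n : ℕ} (V : Submodule ℝ (EuclideanSpace ℝ (Fin n))) :
    EuclideanSpace ℝ (Fin n) →L[ℝ] EuclideanSpace ℝ (Fin n) :=
  V.subtypeL.comp (Submodule.orthogonalProjection V)

/-!
For `x ⊥ ker A` one has `‖(I - ω AᵀA) x‖² ≤ ‖x‖² - ω (2 - ω ‖A‖²) ‖A x‖²`, by expanding the square
and bounding `‖Aᵀ(A x)‖ ≤ ‖A‖ ‖A x‖`. In finite dimensions `A` is bounded below on `(ker A)ᗮ`,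
`‖A x‖ ≥ c ‖x‖`, so `I - ω AᵀA` is a strict contraction there as soon as `0 < ω < 2 / ‖A‖²`.
Since `range Aᵀ ⊆ (ker A)ᗮ` and the orthogonal projection has norm at most `1`, this bounds
`‖T P_{range Aᵀ}‖` away from `1`.
-/

open ContinuousLinearMap
open scoped InnerProduct

theorem exists_pos_mul_norm_le_norm_apply_of_mem_orthogonal_ker {E F : Type*}
    [NormedAddCommGroup E] [InnerProductSpace ℝ E] [FiniteDimensional ℝ E]
    [NormedAddCommGroup F] [NormedSpace ℝ F] (S : E →L[ℝ] F) :
    ∃ c > 0, ∀ x ∈ S.kerᗮ, c * ‖x‖ ≤ ‖S x‖ := by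
  have h_inj : LinearMap.ker ((S : E →ₗ[ℝ] F) ∘ₗ S.kerᗮ.subtype) = ⊥ := by
    rw [LinearMap.ker_eq_bot']
    intro x hx
    exact Subtype.ext <| (Submodule.orthogonal_disjoint _).le_bot ⟨hx, x.2⟩
  obtain ⟨K, -, hK⟩ := LinearMap.exists_antilipschitzWith _ h_inj
  obtain ⟨c, hc, hc_le⟩ := antilipschitzWith_iff_exists_mul_le_norm.mp ⟨K, hK⟩
  exact ⟨c, hc, fun x hx => hc_le ⟨x, hx⟩⟩

theorem Submodule.norm_comp_starProjection_le {E F : Type*} [NormedAddCommGroup E]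
    [InnerProductSpace ℝ E] [NormedAddCommGroup F] [NormedSpace ℝ F]
    {V : Submodule ℝ E} [V.HasOrthogonalProjection] (L : E →L[ℝ] F) {q : ℝ} (hq : 0 ≤ q)
    (hL : ∀ x ∈ V, ‖L x‖ ≤ q * ‖x‖) :
    ‖L ∘L V.starProjection‖ ≤ q :=
  opNorm_le_bound _ hq fun x =>
    calc ‖L (V.starProjection x)‖ ≤ q * ‖V.starProjection x‖ :=
          hL _ (V.starProjection_apply_mem x)
      _ ≤ q * ‖x‖ := by gcongr; exact V.norm_starProjection_apply_le x

section

variable {E F : Type*} [NormedAddCommGroup E] [InnerProductSpace ℝ E] [CompleteSpace E]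
  [NormedAddCommGroup F] [InnerProductSpace ℝ F] [CompleteSpace F]

namespace ContinuousLinearMap

theorem range_adjoint_le_orthogonal_ker (S : E →L[ℝ] F) : S†.range ≤ S.kerᗮ := by
  rw [orthogonal_ker]
  exact Submodule.le_topologicalClosure _

theorem norm_one_sub_smul_adjoint_comp_self_apply_sq_le (S : E →L[ℝ] F) (ω : ℝ) (x : E) :
    ‖(1 - ω • (S† ∘L S)) x‖ ^ 2 ≤ ‖x‖ ^ 2 - ω * (2 - ω * ‖S‖ ^ 2) * ‖S x‖ ^ 2 := by
  have h_inner : inner ℝ x ((S†) (S x)) = ‖S x‖ ^ 2 := by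
    rw [adjoint_inner_right, real_inner_self_eq_norm_sq]
  have h_norm : ‖(S†) (S x)‖ ^ 2 ≤ ‖S‖ ^ 2 * ‖S x‖ ^ 2 := by
    rw [← mul_pow, ← adjoint.norm_map S]
    gcongr
    exact le_opNorm _ _
  simp only [_root_.sub_apply, one_apply_eq_self, _root_.smul_apply, comp_apply]
  rw [norm_sub_sq_real, real_inner_smul_right, h_inner, norm_smul, mul_pow, Real.norm_eq_abs,
    sq_abs]
  nlinarith [mul_le_mul_of_nonneg_left h_norm (sq_nonneg ω)]

theorem norm_one_sub_smul_adjoint_comp_self_comp_starProjection_lt_one [FiniteDimensional ℝ E]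
    (S : E →L[ℝ] F) {ω : ℝ} (hω : 0 < ω) (hωS : ω * ‖S‖ ^ 2 < 2) (V : Submodule ℝ E)
    (hV : V ≤ S.kerᗮ) : ‖(1 - ω • (S† ∘L S)) ∘L V.starProjection‖ < 1 := by
  obtain ⟨c, hc, hc_le⟩ := exists_pos_mul_norm_le_norm_apply_of_mem_orthogonal_ker S
  set δ := ω * (2 - ω * ‖S‖ ^ 2) * c ^ 2
  have hδ : 0 < δ := mul_pos (mul_pos hω (by linarith)) (by positivity)
  refine (V.norm_comp_starProjection_le _ (Real.sqrt_nonneg (1 - δ)) fun x hx => ?_).trans_lt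
    ((Real.sqrt_lt' one_pos).mpr (by linarith))
  have h_sq : ‖(1 - ω • (S† ∘L S)) x‖ ^ 2 ≤ (1 - δ) * ‖x‖ ^ 2 := by
    have h_lower : (c * ‖x‖) ^ 2 ≤ ‖S x‖ ^ 2 := by gcongr; exact hc_le x (hV hx)
    have := mul_le_mul_of_nonneg_left h_lower (by positivity : 0 ≤ ω * (2 - ω * ‖S‖ ^ 2))
    nlinarith [norm_one_sub_smul_adjoint_comp_self_apply_sq_le S ω x]
  rw [← Real.sqrt_sq (norm_nonneg x), ← Real.sqrt_mul' _ (sq_nonneg _)]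
  exact Real.le_sqrt_of_sq_le h_sq

end ContinuousLinearMap

end

theorem mulE_transpose {m n : ℕ} (A : Matrix (Fin m) (Fin n) ℝ) : mulE Aᵀ = (mulE A)† := by
  rw [mulE, mulE, ← A.conjTranspose_eq_transpose_of_trivial,
    Matrix.toEuclideanLin_conjTranspose_eq_adjoint, LinearMap.adjoint_toContinuousLinearMap]

theorem mulE_one_sub_smul_transpose_mul {m n : ℕ} (A : Matrix (Fin m) (Fin n) ℝ) (ω : ℝ) :
    mulE (1 - ω • (Aᵀ * A)) = 1 - ω • ((mulE A)† ∘L mulE A) := by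
  ext1 x
  rw [← mulE_transpose]
  simp [mulE]

theorem landweber_matrices_satisfy_properties_general (m n : ℕ)
    (A : Matrix (Fin m) (Fin n) ℝ)
    (ε ω : ℝ) (hε : 0 < ε)
    (hω1 : ε ≤ ω) (hω2 : ω ≤ 2 / ‖mulE A‖ ^ 2 - ε)
    (T : Matrix (Fin n) (Fin n) ℝ) (hT : T = 1 - ω • (Aᵀ * A))
    (R : Matrix (Fin n) (Fin m) ℝ) (hR : R = ω • Aᵀ) :
    T + R * A = 1 ∧
    (∀ y : EuclideanSpace ℝ (Fin m),
      mulE R y ∈ LinearMap.range (Matrix.toEuclideanLin Aᵀ)) ∧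
    ‖(mulE T).comp (projCLM (LinearMap.range (Matrix.toEuclideanLin Aᵀ)))‖ < 1 := by
  have hω : 0 < ω := hε.trans_le hω1
  have hωA : ω * ‖mulE A‖ ^ 2 < 2 := by
    rcases (norm_nonneg (mulE A)).eq_or_lt with hA | hA
    · simp [← hA]
    · exact (lt_div_iff₀ (by positivity)).mp (by linarith)
  subst hT hR
  refine ⟨by rw [Matrix.smul_mul]; abel, fun y => ⟨ω • y, by simp [mulE]⟩, ?_⟩
  have hV : LinearMap.range (Matrix.toEuclideanLin Aᵀ) ≤ (mulE A).kerᗮ := by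
    have := (mulE A).range_adjoint_le_orthogonal_ker
    rwa [← mulE_transpose] at this
  rw [mulE_one_sub_smul_transpose_mul]
  exact norm_one_sub_smul_adjoint_comp_self_comp_starProjection_lt_one _ hω hωA _ hV

/-- For the Landweber matrices `T = I − ω AᵀA`, `R = ω Aᵀ` with
`0 < ε ≤ ω ≤ 2/ρ(A)² − ε` (ρ(A) the spectral norm of `A`, assumed positive), the three
properties `T + RA = I`, `range R ⊆ range Aᵀ` and `‖T P_{range Aᵀ}‖ < 1` hold. -/
theorem landweber_matrices_satisfy_properties (m n : ℕ)
    (A : Matrix (Fin m) (Fin n) ℝ)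
    (hA : 0 < ‖mulE A‖)
    (ε ω : ℝ) (hε : 0 < ε)
    (hω1 : ε ≤ ω) (hω2 : ω ≤ 2 / ‖mulE A‖ ^ 2 - ε)
    (T : Matrix (Fin n) (Fin n) ℝ) (hT : T = 1 - ω • (Aᵀ * A))
    (R : Matrix (Fin n) (Fin m) ℝ) (hR : R = ω • Aᵀ) :
    T + R * A = 1 ∧
    (∀ y : EuclideanSpace ℝ (Fin m),
      mulE R y ∈ LinearMap.range (Matrix.toEuclideanLin Aᵀ)) ∧
    ‖(mulE T).comp (projCLM (LinearMap.range (Matrix.toEuclideanLin Aᵀ)))‖ < 1 :=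
  landweber_matrices_satisfy_properties_general m n A ε ω hε hω1 hω2 T hT R hR
end

section
/- Under the hypotheses T + RA = I, range(R) ⊆ range(Aᵀ), ‖T̃‖ < 1 (T̃ = T P_{range(Aᵀ)}), and with Δ = (I − T̃)⁻¹ R P_{null(Aᵀ)}(b): every fixed point x of Q(x) = Tx + Rb satisfies P_{range(Aᵀ)}(x) = (I − T̃)⁻¹ R b = x_{LS} + Δ, where x_{LS} is the minimal-norm least squares solution of Ax = b. -/
/-! Since `T + RA = I`, the map `T` fixes `ker A = (range Aᵀ)ᗮ`, and for `u ∈ V = range Aᵀ` we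
have `(I - T̃) u = u - T u = RA u`, i.e. `(I - T̃)⁻¹ RA u = u`. A fixed point `x` gives
`Rb = RAx = RA (P_V x)`, hence `P_V x = (I - T̃)⁻¹ Rb`. The minimal-norm least squares solution lies
in `V` (projecting onto `V` keeps `A x` and does not increase the norm) and satisfies the normal
equations, so `P_{ker Aᵀ} b = b - A x_LS` and `(I - T̃)⁻¹ Rb = (I - T̃)⁻¹ RA x_LS + Δ = x_LS + Δ`. -/

open Matrix

open scoped InnerProduct

namespace ContinuousLinearMap

section NormedSpace

variable {𝕜 E F : Type*} [NontriviallyNormedField 𝕜] [NormedAddCommGroup E] [NormedSpace 𝕜 E]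
  [NormedAddCommGroup F] [NormedSpace 𝕜 F]

theorem inverse_one_sub_apply_of_sub_eq [CompleteSpace E]
    {f : E →L[𝕜] E} (hf : ‖f‖ < 1) {u c : E} (h : u - f u = c) :
    Ring.inverse (1 - f) c = u := by
  rw [← h]
  simpa using congrArg (· u) (Ring.inverse_mul_cancel _ ⟨Units.oneSub f hf, rfl⟩)

theorem add_comp_eq_one_apply {T : E →L[𝕜] E} {R : F →L[𝕜] E}
    {A : E →L[𝕜] F} (hTRA : T + R ∘L A = 1) (v : E) :
    T v + R (A v) = v := by
  simpa using congrArg (· v) hTRA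

end NormedSpace

section FixedPoint

variable {𝕜 E F : Type*} [RCLike 𝕜] [NormedAddCommGroup E] [InnerProductSpace 𝕜 E]
  [CompleteSpace E] [NormedAddCommGroup F] [NormedSpace 𝕜 F]
  {T : E →L[𝕜] E} {R : F →L[𝕜] E} {A : E →L[𝕜] F}

theorem inverse_one_sub_comp_starProjection_apply (hTRA : T + R ∘L A = 1)
    {V : Submodule 𝕜 E} [V.HasOrthogonalProjection] (hT : ‖T ∘L V.starProjection‖ < 1)
    {u : E} (hu : u ∈ V) :
    Ring.inverse (1 - T ∘L V.starProjection) (R (A u)) = u := by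
  refine inverse_one_sub_apply_of_sub_eq hT ?_
  rw [comp_apply, Submodule.starProjection_eq_self_iff.2 hu]
  exact (eq_sub_of_add_eq' (add_comp_eq_one_apply hTRA u)).symm

end FixedPoint

section LeastSquares

variable {𝕜 E F : Type*} [RCLike 𝕜]
  [NormedAddCommGroup E] [InnerProductSpace 𝕜 E] [CompleteSpace E]
  [NormedAddCommGroup F] [InnerProductSpace 𝕜 F] [CompleteSpace F]

theorem orthogonal_range_adjoint (A : E →L[𝕜] F) :
    A†.rangeᗮ = A.ker := by
  simpa using A†.orthogonal_range

theorem apply_starProjection_range_adjoint (A : E →L[𝕜] F)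
    [A†.range.HasOrthogonalProjection] (x : E) :
    A (A†.range.starProjection x) = A x := by
  have h := A†.range.sub_starProjection_mem_orthogonal x
  rw [orthogonal_range_adjoint, LinearMap.mem_ker, map_sub, sub_eq_zero] at h
  exact h.symm

theorem starProjection_ker_adjoint_of_forall_norm_le (A : E →L[𝕜] F)
    [A†.ker.HasOrthogonalProjection] {b : F} {x : E} (hx : ∀ z, ‖A x - b‖ ≤ ‖A z - b‖) :
    A†.ker.starProjection b = b - A x := by
  have hres : b - A x ∈ A†.ker :=
    (A.forall_norm_sub_apply_le_iff_adjoint_apply_sub_eq_zero b x).1 fun z => by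
      simpa only [norm_sub_rev b] using hx z
  refine Submodule.eq_starProjection_of_mem_orthogonal hres ?_
  rw [sub_sub_cancel, ← A.orthogonal_range]
  exact Submodule.le_orthogonal_orthogonal _ ⟨x, rfl⟩

theorem mem_range_adjoint_of_forall_norm_le (A : E →L[𝕜] F)
    [A†.range.HasOrthogonalProjection] {b : F} {x : E} (hx : ∀ z, ‖A x - b‖ ≤ ‖A z - b‖)
    (hmin : ∀ z, (∀ w, ‖A z - b‖ ≤ ‖A w - b‖) → ‖x‖ ≤ ‖z‖) :
    x ∈ A†.range := by
  rw [Submodule.mem_iff_norm_starProjection]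
  refine le_antisymm (Submodule.norm_starProjection_apply_le _ x) (hmin _ fun w => ?_)
  rw [apply_starProjection_range_adjoint]
  exact hx w

end LeastSquares

end ContinuousLinearMap

section MatrixMaps

variable {m n k : ℕ}

theorem projCLM_eq_starProjection (V : Submodule ℝ (EuclideanSpace ℝ (Fin n))) :
    projCLM V = V.starProjection :=
  rfl

theorem mulE_add (M N : Matrix (Fin m) (Fin n) ℝ) : mulE (M + N) = mulE M + mulE N := by
  ext1 v
  simp [mulE]

theorem mulE_mul (M : Matrix (Fin m) (Fin n) ℝ) (N : Matrix (Fin n) (Fin k) ℝ) :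
    mulE (M * N) = mulE M ∘L mulE N := by
  ext1 v
  simp [mulE]

theorem mulE_one : mulE (1 : Matrix (Fin n) (Fin n) ℝ) = 1 := by
  ext1 v
  simp [mulE]

theorem Matrix.toEuclideanLin_transpose_eq_adjoint_mulE (A : Matrix (Fin m) (Fin n) ℝ) :
    toEuclideanLin Aᵀ = ((mulE A)† : EuclideanSpace ℝ (Fin m) →ₗ[ℝ] EuclideanSpace ℝ (Fin n)) := by
  rw [← conjTranspose_eq_transpose_of_trivial, toEuclideanLin_conjTranspose_eq_adjoint]
  rfl

end MatrixMaps

theorem fixed_point_projection_general (m n : ℕ)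
    (A : Matrix (Fin m) (Fin n) ℝ) (b : EuclideanSpace ℝ (Fin m))
    (T : Matrix (Fin n) (Fin n) ℝ)
    (R : Matrix (Fin n) (Fin m) ℝ)
    (h1 : T + R * A = 1)
    (Ttil : EuclideanSpace ℝ (Fin n) →L[ℝ] EuclideanSpace ℝ (Fin n))
    (hTtil : Ttil = (mulE T).comp (projCLM (LinearMap.range (Matrix.toEuclideanLin Aᵀ))))
    (h3 : ‖Ttil‖ < 1)
    (LSS : Set (EuclideanSpace ℝ (Fin n)))
    (hLSS : LSS = {x | ∀ z, ‖mulE A x - b‖ ≤ ‖mulE A z - b‖})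
    (xLS : EuclideanSpace ℝ (Fin n))
    (hxLS : xLS ∈ LSS ∧ ∀ z ∈ LSS, ‖xLS‖ ≤ ‖z‖)
    (Δ : EuclideanSpace ℝ (Fin n))
    (hΔ : Δ = Ring.inverse (1 - Ttil)
      (mulE R (projCLM (LinearMap.ker (Matrix.toEuclideanLin Aᵀ)) b))) :
    ∀ x : EuclideanSpace ℝ (Fin n), mulE T x + mulE R b = x →
      projCLM (LinearMap.range (Matrix.toEuclideanLin Aᵀ)) x =
        Ring.inverse (1 - Ttil) (mulE R b) ∧
      Ring.inverse (1 - Ttil) (mulE R b) = xLS + Δ := by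
  intro x hx
  have hTRA : mulE T + mulE R ∘L mulE A = 1 := by
    rw [← mulE_mul, ← mulE_add, h1, mulE_one]
  simp only [Matrix.toEuclideanLin_transpose_eq_adjoint_mulE, projCLM_eq_starProjection] at hTtil hΔ ⊢
  subst hTtil hΔ hLSS
  have hRb : mulE R b = mulE R (mulE A x) :=
    add_left_cancel (hx.trans (ContinuousLinearMap.add_comp_eq_one_apply hTRA x).symm)
  refine ⟨?_, ?_⟩
  · rw [hRb, ← (mulE A).apply_starProjection_range_adjoint x]
    exact (ContinuousLinearMap.inverse_one_sub_comp_starProjection_apply hTRA h3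
      (Submodule.starProjection_apply_mem _ x)).symm
  · rw [(mulE A).starProjection_ker_adjoint_of_forall_norm_le hxLS.1, map_sub, map_sub,
      ContinuousLinearMap.inverse_one_sub_comp_starProjection_apply hTRA h3
        ((mulE A).mem_range_adjoint_of_forall_norm_le hxLS.1 hxLS.2), add_sub_cancel]

/-- Under `T + RA = I`, `range R ⊆ range Aᵀ`, `‖T̃‖ < 1`, with
`Δ = (I − T̃)⁻¹ R P_{null Aᵀ}(b)`: every fixed point `x` of `Q(x) = Tx + Rb` satisfies
`P_{range Aᵀ}(x) = (I − T̃)⁻¹ R b = x_LS + Δ`, where `x_LS` is the minimal-norm least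
squares solution. -/
theorem fixed_point_projection (m n : ℕ)
    (A : Matrix (Fin m) (Fin n) ℝ) (b : EuclideanSpace ℝ (Fin m))
    (T : Matrix (Fin n) (Fin n) ℝ)
    (R : Matrix (Fin n) (Fin m) ℝ)
    (h1 : T + R * A = 1)
    (h2 : ∀ y : EuclideanSpace ℝ (Fin m),
      mulE R y ∈ LinearMap.range (Matrix.toEuclideanLin Aᵀ))
    (Ttil : EuclideanSpace ℝ (Fin n) →L[ℝ] EuclideanSpace ℝ (Fin n))
    (hTtil : Ttil = (mulE T).comp (projCLM (LinearMap.range (Matrix.toEuclideanLin Aᵀ))))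
    (h3 : ‖Ttil‖ < 1)
    (LSS : Set (EuclideanSpace ℝ (Fin n)))
    (hLSS : LSS = {x | ∀ z, ‖mulE A x - b‖ ≤ ‖mulE A z - b‖})
    (xLS : EuclideanSpace ℝ (Fin n))
    (hxLS : xLS ∈ LSS ∧ ∀ z ∈ LSS, ‖xLS‖ ≤ ‖z‖)
    (Δ : EuclideanSpace ℝ (Fin n))
    (hΔ : Δ = Ring.inverse (1 - Ttil)
      (mulE R (projCLM (LinearMap.ker (Matrix.toEuclideanLin Aᵀ)) b))) :
    ∀ x : EuclideanSpace ℝ (Fin n), mulE T x + mulE R b = x →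
      projCLM (LinearMap.range (Matrix.toEuclideanLin Aᵀ)) x =
        Ring.inverse (1 - Ttil) (mulE R b) ∧
      Ring.inverse (1 - Ttil) (mulE R b) = xLS + Δ :=
  fixed_point_projection_general m n A b T R h1 Ttil hTtil h3 LSS hLSS xLS hxLS Δ hΔ
end
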